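/- arXiv:2501.15131 — 6 statements merged into one kernel-verified Lean document; each statement's English description precedes it below -/
import Mathlib

section
/- Let λ₁ > 0 be the largest eigenvalue of A. Then f(x) ≥ −λ₁/4 for all x ∈ ℝⁿ, and f(x) = −λ₁/4 if and only if A x = λ₁ x and ‖x‖ = (λ₁)^{1/2}/2. In particular the global minimum value of f is −λ₁/4 and the global minimizers are exactly the appropriately scaled dominant eigenvectors of A. -/
/-!
Write `λ = lam1` and `Q(x) = xᵀAx`. Since every eigenvalue of `A` is at most `λ`, the matrix
`λ • 1 - A` is positive semidefinite, so `Q(x) ≤ λ‖x‖²`, with equality exactly when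
`(λ • 1 - A) x = 0`. Hence `f(x) ≥ ‖x‖² - √λ‖x‖ = (‖x‖ - √λ/2)² - λ/4`, and equality holds
throughout iff `A x = λ x` and `‖x‖ = √λ/2`.
-/

open Matrix

def toEuc {n : ℕ} (v : Fin n → ℝ) : EuclideanSpace ℝ (Fin n) := WithLp.toLp 2 v

open scoped MatrixOrder ComplexOrder

theorem EuclideanSpace.ofLp_dotProduct_self {ι : Type*} [Fintype ι] (x : EuclideanSpace ℝ ι) :
    x.ofLp ⬝ᵥ x.ofLp = ‖x‖ ^ 2 := by
  rw [← real_inner_self_eq_norm_sq, EuclideanSpace.inner_eq_star_dotProduct, star_trivial]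

namespace Matrix.IsHermitian

variable {𝕜 ι : Type*} [RCLike 𝕜] [Fintype ι] [DecidableEq ι] {A : Matrix ι ι 𝕜}

theorem posSemidef_smul_one_sub (hA : A.IsHermitian) {c : ℝ} (h : ∀ i, hA.eigenvalues i ≤ c) :
    ((c : 𝕜) • 1 - A).PosSemidef := by
  have hle : A ≤ algebraMap ℝ (Matrix ι ι 𝕜) c := by
    refine le_algebraMap_of_spectrum_le (fun x hx => ?_) hA
    obtain ⟨i, rfl⟩ := hA.spectrum_real_eq_range_eigenvalues ▸ hx
    exact h i
  simpa [Matrix.le_iff, Algebra.algebraMap_eq_smul_one] using hle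

theorem dotProduct_mulVec_le (hA : A.IsHermitian) {c : ℝ} (h : ∀ i, hA.eigenvalues i ≤ c)
    (x : ι → 𝕜) : star x ⬝ᵥ A *ᵥ x ≤ c * (star x ⬝ᵥ x) := by
  have := (hA.posSemidef_smul_one_sub h).dotProduct_mulVec_nonneg x
  rwa [sub_mulVec, smul_mulVec, one_mulVec, dotProduct_sub, dotProduct_smul, smul_eq_mul,
    sub_nonneg] at this

theorem dotProduct_mulVec_eq_iff (hA : A.IsHermitian) {c : ℝ} (h : ∀ i, hA.eigenvalues i ≤ c)
    (x : ι → 𝕜) : star x ⬝ᵥ A *ᵥ x = c * (star x ⬝ᵥ x) ↔ A *ᵥ x = (c : 𝕜) • x := by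
  have := (hA.posSemidef_smul_one_sub h).dotProduct_mulVec_zero_iff x
  rwa [sub_mulVec, smul_mulVec, one_mulVec, dotProduct_sub, dotProduct_smul, smul_eq_mul,
    sub_eq_zero, sub_eq_zero, eq_comm, eq_comm (b := A *ᵥ x)] at this

variable {A : Matrix ι ι ℝ}

theorem dotProduct_mulVec_le_mul_norm_sq (hA : A.IsHermitian) {c : ℝ}
    (h : ∀ i, hA.eigenvalues i ≤ c) (x : EuclideanSpace ℝ ι) :
    x ⬝ᵥ A *ᵥ x ≤ c * ‖x‖ ^ 2 := by
  simpa [← EuclideanSpace.ofLp_dotProduct_self] using hA.dotProduct_mulVec_le h x.ofLp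

theorem sqrt_dotProduct_mulVec_le (hA : A.IsHermitian) {c : ℝ} (h : ∀ i, hA.eigenvalues i ≤ c)
    (x : EuclideanSpace ℝ ι) : √(x ⬝ᵥ A *ᵥ x) ≤ √c * ‖x‖ :=
  calc √(x ⬝ᵥ A *ᵥ x) ≤ √(c * ‖x‖ ^ 2) :=
        Real.sqrt_le_sqrt (hA.dotProduct_mulVec_le_mul_norm_sq h x)
    _ = √c * ‖x‖ := by rw [Real.sqrt_mul' c (sq_nonneg _), Real.sqrt_sq (norm_nonneg x)]

end Matrix.IsHermitian

theorem Matrix.PosSemidef.sqrt_dotProduct_mulVec_eq_iff {ι : Type*} [Fintype ι] [DecidableEq ι]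
    {A : Matrix ι ι ℝ} (hA : A.PosSemidef) {c : ℝ} (h : ∀ i, hA.1.eigenvalues i ≤ c)
    (x : EuclideanSpace ℝ ι) : √(x ⬝ᵥ A *ᵥ x) = √c * ‖x‖ ↔ A *ᵥ x = c • x.ofLp := by
  have hQ : 0 ≤ x ⬝ᵥ A *ᵥ x := by simpa using hA.dotProduct_mulVec_nonneg x.ofLp
  have hle := hA.1.dotProduct_mulVec_le_mul_norm_sq h x
  rw [← Real.sqrt_sq (norm_nonneg x), ← Real.sqrt_mul' c (sq_nonneg _),
    Real.sqrt_inj hQ (hQ.trans hle), ← EuclideanSpace.ofLp_dotProduct_self]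
  simpa using hA.1.dotProduct_mulVec_eq_iff h x.ofLp

theorem neg_div_four_le_sq_sub {c t b : ℝ} (hc : 0 ≤ c) (hb : b ≤ √c * t) :
    -(c / 4) ≤ t ^ 2 - b := by
  nlinarith [sq_nonneg (t - √c / 2), Real.sq_sqrt hc]

theorem sq_sub_eq_neg_div_four_iff {c t b : ℝ} (hc : 0 ≤ c) (hb : b ≤ √c * t) :
    t ^ 2 - b = -(c / 4) ↔ b = √c * t ∧ t = √c / 2 := by
  have hsplit : t ^ 2 - b + c / 4 = (t - √c / 2) ^ 2 + (√c * t - b) := by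
    linear_combination (-1 / 4 : ℝ) * Real.sq_sqrt hc
  rw [← add_eq_zero_iff_eq_neg, hsplit, add_eq_zero_iff_of_nonneg (sq_nonneg _) (sub_nonneg.2 hb),
    sq_eq_zero_iff, sub_eq_zero, sub_eq_zero, and_comm, eq_comm (a := b)]

theorem toEuc_eq_iff {n : ℕ} {v : Fin n → ℝ} {x : EuclideanSpace ℝ (Fin n)} :
    toEuc v = x ↔ v = x.ofLp :=
  ⟨fun h => h ▸ rfl, fun h => h ▸ rfl⟩

theorem stmt_3_general {n : ℕ} (A : Matrix (Fin n) (Fin n) ℝ)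
    (hA : A.PosSemidef)
    (f : EuclideanSpace ℝ (Fin n) → ℝ)
    (hf : ∀ x : EuclideanSpace ℝ (Fin n),
      f x = ‖x‖ ^ 2 - Real.sqrt (x ⬝ᵥ A.mulVec x))
    (lam1 : ℝ) (hlam1_pos : 0 < lam1)
    (hlam1_max : ∀ (μ : ℝ) (v : EuclideanSpace ℝ (Fin n)),
      v ≠ 0 → toEuc (A.mulVec v) = μ • v → μ ≤ lam1) :
    (∀ x : EuclideanSpace ℝ (Fin n), -(lam1 / 4) ≤ f x) ∧
    (∀ x : EuclideanSpace ℝ (Fin n),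
      f x = -(lam1 / 4) ↔ (toEuc (A.mulVec x) = lam1 • x ∧ ‖x‖ = Real.sqrt lam1 / 2)) := by
  have hmax : ∀ i, hA.1.eigenvalues i ≤ lam1 := fun i =>
    hlam1_max _ _ (hA.1.eigenvectorBasis.orthonormal.ne_zero i)
      (toEuc_eq_iff.2 (hA.1.mulVec_eigenvectorBasis i))
  have hbound := hA.1.sqrt_dotProduct_mulVec_le hmax
  refine ⟨fun x => ?_, fun x => ?_⟩
  · rw [hf]
    exact neg_div_four_le_sq_sub hlam1_pos.le (hbound x)
  · rw [hf, sq_sub_eq_neg_div_four_iff hlam1_pos.le (hbound x),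
      hA.sqrt_dotProduct_mulVec_eq_iff hmax, toEuc_eq_iff, WithLp.ofLp_smul]

/-- Let `λ₁ > 0` be the largest eigenvalue of the symmetric PSD matrix `A`. Then
`f(x) = ‖x‖² − (xᵀAx)^{1/2} ≥ −λ₁/4` for all `x`, with equality iff `A x = λ₁ x` and
`‖x‖ = √λ₁ / 2`; i.e. the global minimum value is `−λ₁/4`, attained exactly at the
suitably scaled dominant eigenvectors. -/
theorem stmt_3 {n : ℕ} (hn : 0 < n) (A : Matrix (Fin n) (Fin n) ℝ)
    (hA : A.PosSemidef)
    (f : EuclideanSpace ℝ (Fin n) → ℝ)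
    (hf : ∀ x : EuclideanSpace ℝ (Fin n),
      f x = ‖x‖ ^ 2 - Real.sqrt (x ⬝ᵥ A.mulVec x))
    (lam1 : ℝ) (hlam1_pos : 0 < lam1)
    (hlam1_eig : ∃ v : EuclideanSpace ℝ (Fin n), v ≠ 0 ∧ toEuc (A.mulVec v) = lam1 • v)
    (hlam1_max : ∀ (μ : ℝ) (v : EuclideanSpace ℝ (Fin n)),
      v ≠ 0 → toEuc (A.mulVec v) = μ • v → μ ≤ lam1) :
    (∀ x : EuclideanSpace ℝ (Fin n), -(lam1 / 4) ≤ f x) ∧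
    (∀ x : EuclideanSpace ℝ (Fin n),
      f x = -(lam1 / 4) ↔ (toEuc (A.mulVec x) = lam1 • x ∧ ‖x‖ = Real.sqrt lam1 / 2)) :=
  stmt_3_general A hA f hf lam1 hlam1_pos hlam1_max
end

section
/- Every second-order stationary point of f is a global minimizer: if x ∈ ℝⁿ satisfies A x ≠ 0, ∇f(x) = 2x − Ax/(xᵀAx)^{1/2} = 0, and the Hessian ∇²f(x) = 2I − A/(xᵀAx)^{1/2} + (Ax)(Ax)ᵀ/(xᵀAx)^{3/2} is positive semidefinite, then f(x) = −λ₁/4, where λ₁ is the largest eigenvalue of A. Equivalently, every stationary point of f that is an eigenvector of A for an eigenvalue strictly smaller than λ₁ is a strict saddle point, i.e. its Hessian has a negative eigenvalue. -/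
/-!
Stationarity says `A x = 2 s x` with `s = (xᵀAx)^{1/2}`, so `x` is an eigenvector of `A`, and
pairing with `x` gives `s = 2‖x‖²`, whence `f x = -s/2`. If the eigenvalue `2 s` were below `λ₁`,
a top eigenvector `v` would be orthogonal to `x`, hence annihilated by the rank-one term of the
Hessian, so `H v = (2 - λ₁/s) v` with `2 - λ₁/s < 0` and `x` is a strict saddle. Hence at a
second-order stationary point `2 s = λ₁` and `f x = -λ₁/4`.
-/

open Matrix

theorem toEuc_eq_smul_iff {n : ℕ} {u : Fin n → ℝ} {μ : ℝ} {v : EuclideanSpace ℝ (Fin n)} :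
    toEuc u = μ • v ↔ u = μ • v.ofLp := by
  rw [toEuc, ← (WithLp.ofLp_injective 2).eq_iff, WithLp.ofLp_toLp, WithLp.ofLp_smul]

theorem EuclideanSpace.norm_sq_eq_dotProduct {ι : Type*} [Fintype ι] (x : EuclideanSpace ℝ ι) :
    ‖x‖ ^ 2 = x ⬝ᵥ x := by
  rw [← real_inner_self_eq_norm_sq, EuclideanSpace.inner_eq_star_dotProduct]
  simp

namespace Matrix

variable {ι : Type*} [Fintype ι]

theorem IsHermitian.dotProduct_eq_zero_of_mulVec_eq_smul {A : Matrix ι ι ℝ} (hA : A.IsHermitian)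
    {u v : ι → ℝ} {a b : ℝ} (hu : A *ᵥ u = a • u) (hv : A *ᵥ v = b • v) (hab : a ≠ b) :
    u ⬝ᵥ v = 0 := by
  have hAT : Aᵀ = A := by simpa [IsHermitian] using hA
  have h : a * (u ⬝ᵥ v) = b * (u ⬝ᵥ v) := calc
    a * (u ⬝ᵥ v) = v ⬝ᵥ A *ᵥ u := by rw [hu, dotProduct_smul, dotProduct_comm, smul_eq_mul]
    _ = u ⬝ᵥ A *ᵥ v := by rw [dotProduct_mulVec, ← mulVec_transpose, hAT, dotProduct_comm]
    _ = b * (u ⬝ᵥ v) := by rw [hv, dotProduct_smul, smul_eq_mul]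
  exact (mul_eq_mul_right_iff.1 h).resolve_left hab

theorem PosSemidef.nonneg_of_mulVec_eq_smul {H : Matrix ι ι ℝ} (hH : H.PosSemidef) {v : ι → ℝ}
    {c : ℝ} (hv : v ≠ 0) (h : H *ᵥ v = c • v) : 0 ≤ c := by
  have hvv : 0 < v ⬝ᵥ v := by simpa using dotProduct_star_self_pos_iff.2 hv
  have hvHv := hH.dotProduct_mulVec_nonneg v
  rw [h, star_trivial, dotProduct_smul, smul_eq_mul] at hvHv
  exact nonneg_of_mul_nonneg_left hvHv hvv

theorem mulVec_add_smul_vecMulVec_of_dotProduct_eq_zero (M : Matrix ι ι ℝ) (t : ℝ) {u v : ι → ℝ}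
    (huv : u ⬝ᵥ v = 0) : (M + t • vecMulVec u u) *ᵥ v = M *ᵥ v := by
  rw [add_mulVec, smul_mulVec, vecMulVec_mulVec, huv]
  simp

end Matrix

section StationaryPoint

variable {n : ℕ} {A : Matrix (Fin n) (Fin n) ℝ} {x : EuclideanSpace ℝ (Fin n)} {s : ℝ}

theorem ne_zero_of_stationary (hx : A *ᵥ x ≠ 0) (hstat : (2 : ℝ) • x - s⁻¹ • toEuc (A *ᵥ x) = 0) :
    s ≠ 0 := by
  rintro rfl
  obtain rfl : x = 0 := by simpa using hstat
  simp at hx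

theorem mulVec_eq_smul_of_stationary (hs : s ≠ 0)
    (hstat : (2 : ℝ) • x - s⁻¹ • toEuc (A *ᵥ x) = 0) : A *ᵥ x = (2 * s) • x.ofLp := by
  rw [← toEuc_eq_smul_iff, mul_comm, mul_smul, ← inv_smul_eq_iff₀ hs]
  exact (sub_eq_zero.1 hstat).symm

theorem sqrt_eq_two_mul_norm_sq_of_mulVec_eq_smul (hs : √(x ⬝ᵥ A *ᵥ x) ≠ 0)
    (hAx : A *ᵥ x = (2 * √(x ⬝ᵥ A *ᵥ x)) • x.ofLp) : √(x ⬝ᵥ A *ᵥ x) = 2 * ‖x‖ ^ 2 := by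
  set s := √(x ⬝ᵥ A *ᵥ x)
  have hq : 0 ≤ x ⬝ᵥ A *ᵥ x := (Real.sqrt_ne_zero'.1 hs).le
  refine mul_left_cancel₀ hs ?_
  calc s * s = x ⬝ᵥ A *ᵥ x := Real.mul_self_sqrt hq
    _ = s * (2 * ‖x‖ ^ 2) := by
      rw [hAx, dotProduct_smul, smul_eq_mul, EuclideanSpace.norm_sq_eq_dotProduct]; ring

end StationaryPoint

theorem exists_neg_eigenvalue_hessian_of_lt {ι : Type*} [Fintype ι] [DecidableEq ι] {A : Matrix ι ι ℝ}
    (hA : A.IsHermitian) {x v : ι → ℝ} {s t μ : ℝ} (hs : 0 < s) (hAx : A *ᵥ x = (2 * s) • x)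
    (hv0 : v ≠ 0) (hv : A *ᵥ v = μ • v) (hlt : 2 * s < μ) :
    ∃ (c : ℝ) (w : ι → ℝ), c < 0 ∧ w ≠ 0 ∧
      ((2 : ℝ) • (1 : Matrix ι ι ℝ) - s⁻¹ • A + t • vecMulVec (A *ᵥ x) (A *ᵥ x)) *ᵥ w = c • w := by
  have hxv : x ⬝ᵥ v = 0 := hA.dotProduct_eq_zero_of_mulVec_eq_smul hAx hv hlt.ne
  have hAxv : A *ᵥ x ⬝ᵥ v = 0 := by rw [hAx, smul_dotProduct, hxv, smul_zero]
  refine ⟨2 - s⁻¹ * μ, v, ?_, hv0, ?_⟩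
  · rw [sub_neg, lt_inv_mul_iff₀ hs]
    linarith
  · rw [mulVec_add_smul_vecMulVec_of_dotProduct_eq_zero _ _ hAxv, sub_mulVec, smul_mulVec,
      smul_mulVec, one_mulVec, hv, smul_smul, ← sub_smul]

theorem stmt_4_general {n : ℕ} (A : Matrix (Fin n) (Fin n) ℝ)
    (hA : A.PosSemidef)
    (f : EuclideanSpace ℝ (Fin n) → ℝ)
    (hf : ∀ x : EuclideanSpace ℝ (Fin n),
      f x = ‖x‖ ^ 2 - Real.sqrt (x ⬝ᵥ A.mulVec x))
    (lam1 : ℝ)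
    (hlam1_eig : ∃ v : EuclideanSpace ℝ (Fin n), v ≠ 0 ∧ toEuc (A.mulVec v) = lam1 • v)
    (hlam1_max : ∀ (μ : ℝ) (v : EuclideanSpace ℝ (Fin n)),
      v ≠ 0 → toEuc (A.mulVec v) = μ • v → μ ≤ lam1)
    (x : EuclideanSpace ℝ (Fin n))
    (hx : A.mulVec x ≠ 0)
    (hstat : (2 : ℝ) • x - (Real.sqrt (x ⬝ᵥ A.mulVec x))⁻¹ • toEuc (A.mulVec x) = 0)
    (H : Matrix (Fin n) (Fin n) ℝ)
    (hH : H = (2 : ℝ) • (1 : Matrix (Fin n) (Fin n) ℝ)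
        - (Real.sqrt (x ⬝ᵥ A.mulVec x))⁻¹ • A
        + (Real.sqrt (x ⬝ᵥ A.mulVec x) ^ 3)⁻¹ • vecMulVec (A.mulVec x) (A.mulVec x)) :
    (H.PosSemidef → f x = -(lam1 / 4)) ∧
    (∀ μ : ℝ, toEuc (A.mulVec x) = μ • x → μ < lam1 →
      ∃ (c : ℝ) (w : Fin n → ℝ), c < 0 ∧ w ≠ 0 ∧ H.mulVec w = c • w) := by
  have hs0 := ne_zero_of_stationary hx hstat
  have hAx := mulVec_eq_smul_of_stationary hs0 hstat
  set s := √(x ⬝ᵥ A *ᵥ x)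
  have hs : 0 < s := (Real.sqrt_nonneg _).lt_of_ne' hs0
  have hx0 : x ≠ 0 := by rintro rfl; simp at hx
  have hle : 2 * s ≤ lam1 := hlam1_max _ x hx0 (toEuc_eq_smul_iff.2 hAx)
  have saddle : 2 * s < lam1 → ∃ (c : ℝ) (w : Fin n → ℝ), c < 0 ∧ w ≠ 0 ∧ H *ᵥ w = c • w := by
    obtain ⟨v, hv0, hv⟩ := hlam1_eig
    exact hH ▸ exists_neg_eigenvalue_hessian_of_lt hA.isHermitian hs hAx
      ((WithLp.ofLp_eq_zero 2).not.2 hv0) (toEuc_eq_smul_iff.1 hv)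
  refine ⟨fun hH_psd => ?_, fun μ hμ hμ_lt => ?_⟩
  · have hlam1 : 2 * s = lam1 := hle.antisymm <| not_lt.1 fun hlt => by
      obtain ⟨c, w, hc, hw0, hw⟩ := saddle hlt
      exact hc.not_ge (hH_psd.nonneg_of_mulVec_eq_smul hw0 hw)
    have hnorm := sqrt_eq_two_mul_norm_sq_of_mulVec_eq_smul hs0 hAx
    rw [hf]
    linarith
  · have hμ_eq : μ = 2 * s := smul_left_injective ℝ ((WithLp.ofLp_eq_zero 2).not.2 hx0)
      ((toEuc_eq_smul_iff.1 hμ).symm.trans hAx)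
    exact saddle (hμ_eq ▸ hμ_lt)

/-- Every second-order stationary point of `f(x) = ‖x‖² − (xᵀAx)^{1/2}` is a global
minimizer: if `A x ≠ 0`, `∇f(x) = 2x − Ax/(xᵀAx)^{1/2} = 0`, and the Hessian
`∇²f(x) = 2I − A/(xᵀAx)^{1/2} + (Ax)(Ax)ᵀ/(xᵀAx)^{3/2}` is positive semidefinite, then
`f(x) = −λ₁/4` where `λ₁` is the largest eigenvalue of `A`. Equivalently, every stationary
point that is an eigenvector of `A` for an eigenvalue strictly smaller than `λ₁` is a
strict saddle point: its Hessian has a negative eigenvalue. -/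
theorem stmt_4 {n : ℕ} (hn : 0 < n) (A : Matrix (Fin n) (Fin n) ℝ)
    (hA : A.PosSemidef)
    (f : EuclideanSpace ℝ (Fin n) → ℝ)
    (hf : ∀ x : EuclideanSpace ℝ (Fin n),
      f x = ‖x‖ ^ 2 - Real.sqrt (x ⬝ᵥ A.mulVec x))
    (lam1 : ℝ)
    (hlam1_eig : ∃ v : EuclideanSpace ℝ (Fin n), v ≠ 0 ∧ toEuc (A.mulVec v) = lam1 • v)
    (hlam1_max : ∀ (μ : ℝ) (v : EuclideanSpace ℝ (Fin n)),
      v ≠ 0 → toEuc (A.mulVec v) = μ • v → μ ≤ lam1)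
    (x : EuclideanSpace ℝ (Fin n))
    (hx : A.mulVec x ≠ 0)
    (hstat : (2 : ℝ) • x - (Real.sqrt (x ⬝ᵥ A.mulVec x))⁻¹ • toEuc (A.mulVec x) = 0)
    (H : Matrix (Fin n) (Fin n) ℝ)
    (hH : H = (2 : ℝ) • (1 : Matrix (Fin n) (Fin n) ℝ)
        - (Real.sqrt (x ⬝ᵥ A.mulVec x))⁻¹ • A
        + (Real.sqrt (x ⬝ᵥ A.mulVec x) ^ 3)⁻¹ • vecMulVec (A.mulVec x) (A.mulVec x)) :
    (H.PosSemidef → f x = -(lam1 / 4)) ∧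
    (∀ μ : ℝ, toEuc (A.mulVec x) = μ • x → μ < lam1 →
      ∃ (c : ℝ) (w : Fin n → ℝ), c < 0 ∧ w ≠ 0 ∧ H.mulVec w = c • w) :=
  stmt_4_general A hA f hf lam1 hlam1_eig hlam1_max x hx hstat H hH
end

section
/- The quadratic model with curvature 2I is a global majorant of f: for every y ∈ ℝⁿ with A y ≠ 0 and every x ∈ ℝⁿ, f(x) ≤ f(y) + ⟨∇f(y), x − y⟩ + ‖x − y‖², where ∇f(y) = 2y − Ay/(yᵀAy)^{1/2}. -/
/-!
Since `‖x‖² = ‖y‖² + 2⟪y, x - y⟫ + ‖x - y‖²` exactly, the inequality amounts to the tangent plane of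
`h(x) = √(xᵀAx)` at `y` lying below `h`. As `(Ay)ᵀy = h(y)²`, this tangent plane is the linear form
`x ↦ (Ay)ᵀx / h(y)`, and `(Ay)ᵀx ≤ h(x) h(y)` is the Cauchy–Schwarz inequality for the positive
semidefinite form `A`.
-/

open Matrix RealInnerProductSpace

theorem Matrix.IsSymm.dotProduct_mulVec_comm {m R : Type*} [Fintype m] [CommSemiring R]
    {A : Matrix m m R} (hA : A.IsSymm) (x y : m → R) : x ⬝ᵥ A *ᵥ y = y ⬝ᵥ A *ᵥ x := by
  rw [dotProduct_mulVec, ← mulVec_transpose, hA.eq, dotProduct_comm]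

namespace Matrix.PosSemidef

variable {m : Type*} {A : Matrix m m ℝ}

theorem isSymm (hA : A.PosSemidef) : A.IsSymm :=
  isHermitian_iff_isSymm.mp hA.isHermitian

variable [Fintype m]

theorem dotProduct_mulVec_self_nonneg (hA : A.PosSemidef) (x : m → ℝ) : 0 ≤ x ⬝ᵥ A *ᵥ x :=
  hA.dotProduct_mulVec_nonneg x

theorem dotProduct_mulVec_le_sqrt_mul_sqrt (hA : A.PosSemidef) (x y : m → ℝ) :
    x ⬝ᵥ A *ᵥ y ≤ √(x ⬝ᵥ A *ᵥ x) * √(y ⬝ᵥ A *ᵥ y) := by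
  classical
  have hCS := LinearMap.BilinForm.apply_sq_le_of_symm (toLinearMap₂' ℝ A)
    (by simpa only [toLinearMap₂'_apply'] using hA.dotProduct_mulVec_self_nonneg)
    ⟨fun u v => by simpa only [toLinearMap₂'_apply', RingHom.id_apply]
      using hA.isSymm.dotProduct_mulVec_comm u v⟩ x y
  simp only [toLinearMap₂'_apply'] at hCS
  rw [← Real.sqrt_mul (hA.dotProduct_mulVec_self_nonneg x)]
  exact (le_abs_self _).trans (Real.abs_le_sqrt hCS)

theorem sqrt_dotProduct_mulVec_pos (hA : A.PosSemidef) {y : m → ℝ} (hy : A *ᵥ y ≠ 0) :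
    0 < √(y ⬝ᵥ A *ᵥ y) :=
  Real.sqrt_pos.mpr <| (hA.dotProduct_mulVec_self_nonneg y).lt_of_ne' <| by
    simpa only [star_trivial] using (hA.dotProduct_mulVec_zero_iff y).not.mpr hy

theorem sqrt_dotProduct_mulVec_add_le (hA : A.PosSemidef) {y : m → ℝ} (hy : A *ᵥ y ≠ 0)
    (x : m → ℝ) :
    √(y ⬝ᵥ A *ᵥ y) + (√(y ⬝ᵥ A *ᵥ y))⁻¹ * (A *ᵥ y ⬝ᵥ (x - y)) ≤ √(x ⬝ᵥ A *ᵥ x) := by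
  set s := √(y ⬝ᵥ A *ᵥ y)
  have hs : 0 < s := hA.sqrt_dotProduct_mulVec_pos hy
  have hss : s * s = y ⬝ᵥ A *ᵥ y := Real.mul_self_sqrt (hA.dotProduct_mulVec_self_nonneg y)
  have hCS : y ⬝ᵥ A *ᵥ x ≤ s * √(x ⬝ᵥ A *ᵥ x) := hA.dotProduct_mulVec_le_sqrt_mul_sqrt y x
  have hlin : A *ᵥ y ⬝ᵥ (x - y) = y ⬝ᵥ A *ᵥ x - s * s := by
    rw [hss, dotProduct_sub, dotProduct_comm, dotProduct_comm (A *ᵥ y),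
      hA.isSymm.dotProduct_mulVec_comm x]
  calc s + s⁻¹ * (A *ᵥ y ⬝ᵥ (x - y)) = s⁻¹ * (y ⬝ᵥ A *ᵥ x) := by
        rw [hlin]; field_simp; ring
    _ ≤ √(x ⬝ᵥ A *ᵥ x) := by rwa [inv_mul_le_iff₀ hs]

end Matrix.PosSemidef

theorem inner_toEuc_left {n : ℕ} (u : Fin n → ℝ) (v : EuclideanSpace ℝ (Fin n)) :
    ⟪toEuc u, v⟫ = u ⬝ᵥ v := by
  rw [EuclideanSpace.inner_eq_star_dotProduct, star_trivial, dotProduct_comm]; rfl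

theorem stmt_6_general {n : ℕ} (A : Matrix (Fin n) (Fin n) ℝ)
    (hA : A.PosSemidef)
    (f : EuclideanSpace ℝ (Fin n) → ℝ)
    (hf : ∀ x : EuclideanSpace ℝ (Fin n),
      f x = ‖x‖ ^ 2 - Real.sqrt (x ⬝ᵥ A.mulVec x))
    (y : EuclideanSpace ℝ (Fin n))
    (hy : A.mulVec y ≠ 0)
    (gradf : EuclideanSpace ℝ (Fin n))
    (hgrad : gradf = (2 : ℝ) • y - (Real.sqrt (y ⬝ᵥ A.mulVec y))⁻¹ • toEuc (A.mulVec y)) :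
    ∀ x : EuclideanSpace ℝ (Fin n),
      f x ≤ f y + ⟪gradf, x - y⟫ + ‖x - y‖ ^ 2 := by
  intro x
  have htangent := hA.sqrt_dotProduct_mulVec_add_le hy x
  have hgrad_inner : ⟪gradf, x - y⟫ =
      2 * ⟪y, x - y⟫ - (√(y ⬝ᵥ A *ᵥ y))⁻¹ * (A *ᵥ y ⬝ᵥ (x - y)) := by
    rw [hgrad, inner_sub_left, real_inner_smul_left, real_inner_smul_left, inner_toEuc_left,
      WithLp.ofLp_sub]
  have hnorm : ‖x‖ ^ 2 = ‖y‖ ^ 2 + 2 * ⟪y, x - y⟫ + ‖x - y‖ ^ 2 := by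
    rw [norm_sub_sq_real, inner_sub_right, real_inner_self_eq_norm_sq, real_inner_comm]; ring
  rw [hf, hf, hgrad_inner]
  linarith

/-- The quadratic model with curvature `2I` is a global majorant of
`f(x) = ‖x‖² − (xᵀAx)^{1/2}`: for every `y` with `A y ≠ 0` and every `x`,
`f(x) ≤ f(y) + ⟨∇f(y), x − y⟩ + ‖x − y‖²`, where `∇f(y) = 2y − Ay/(yᵀAy)^{1/2}`. -/
theorem stmt_6 {n : ℕ} (hn : 0 < n) (A : Matrix (Fin n) (Fin n) ℝ)
    (hA : A.PosSemidef)
    (f : EuclideanSpace ℝ (Fin n) → ℝ)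
    (hf : ∀ x : EuclideanSpace ℝ (Fin n),
      f x = ‖x‖ ^ 2 - Real.sqrt (x ⬝ᵥ A.mulVec x))
    (y : EuclideanSpace ℝ (Fin n))
    (hy : A.mulVec y ≠ 0)
    (gradf : EuclideanSpace ℝ (Fin n))
    (hgrad : gradf = (2 : ℝ) • y - (Real.sqrt (y ⬝ᵥ A.mulVec y))⁻¹ • toEuc (A.mulVec y)) :
    ∀ x : EuclideanSpace ℝ (Fin n),
      f x ≤ f y + ⟪gradf, x - y⟫ + ‖x - y‖ ^ 2 :=
  stmt_6_general A hA f hf y hy gradf hgrad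
end

section
/- For every x ∈ ℝⁿ with A x ≠ 0, the matrix 2I − ∇²f(x) = A/(xᵀAx)^{1/2} − (Ax)(Ax)ᵀ/(xᵀAx)^{3/2} is positive semidefinite; that is, every eigenvalue of the Hessian ∇²f(x) is at most 2 (f has positive Lipschitz constant L₊ = 2). -/
/-!
Factoring out `(xᵀAx)^{-1/2}`, the matrix `2I − ∇²f(x)` becomes `A − (Ax)(Ax)ᵀ / xᵀAx`, whose
quadratic form `wᵀAw − (wᵀAx)² / xᵀAx` is nonnegative by Cauchy–Schwarz for the semi-inner
product `⟨v, w⟩ = vᵀAw`. An eigenvector `w` of the Hessian with eigenvalue `μ` then gives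
`0 ≤ (2 − μ) ‖w‖²`.
-/

open Matrix

namespace Matrix.PosSemidef

variable {ι : Type*} [Fintype ι] {A : Matrix ι ι ℝ}

theorem dotProduct_mulVec_comm (hA : A.PosSemidef) (v w : ι → ℝ) :
    v ⬝ᵥ A *ᵥ w = w ⬝ᵥ A *ᵥ v := by
  rw [dotProduct_mulVec, dotProduct_comm, ← mulVec_transpose,
    ← conjTranspose_eq_transpose_of_trivial, hA.isHermitian.eq]

theorem sq_dotProduct_mulVec_le (hA : A.PosSemidef) (v w : ι → ℝ) :
    (v ⬝ᵥ A *ᵥ w) ^ 2 ≤ (v ⬝ᵥ A *ᵥ v) * (w ⬝ᵥ A *ᵥ w) := by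
  classical
  simpa only [toBilin'_apply'] using (toBilin' A).apply_sq_le_of_symm
    (fun u => by simpa only [toBilin'_apply', star_trivial] using hA.dotProduct_mulVec_nonneg u)
    ⟨fun u u' => by
      simpa only [toBilin'_apply', RingHom.id_apply] using hA.dotProduct_mulVec_comm u u'⟩ v w

-- When `xᵀAx = 0` the junk value `0⁻¹ = 0` reduces the matrix to `A`.
theorem sub_smul_vecMulVec_mulVec (hA : A.PosSemidef) (x : ι → ℝ) :
    (A - (x ⬝ᵥ A *ᵥ x)⁻¹ • vecMulVec (A *ᵥ x) (A *ᵥ x)).PosSemidef := by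
  have hAx : (vecMulVec (A *ᵥ x) (A *ᵥ x)).IsHermitian := by
    simpa using (posSemidef_vecMulVec_self_star (A *ᵥ x)).isHermitian
  refine of_dotProduct_mulVec_nonneg (hA.isHermitian.sub (hAx.smul (IsSelfAdjoint.all _)))
    fun w => ?_
  have hCS := hA.sq_dotProduct_mulVec_le w x
  have hq : 0 ≤ x ⬝ᵥ A *ᵥ x := by simpa using hA.dotProduct_mulVec_nonneg x
  simp only [star_trivial, sub_mulVec, smul_mulVec, vecMulVec_mulVec, dotProduct_sub,
    dotProduct_smul]
  rw [op_smul_eq_mul, smul_eq_mul, dotProduct_comm (A *ᵥ x) w, ← sq, sub_nonneg]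
  calc (x ⬝ᵥ A *ᵥ x)⁻¹ * (w ⬝ᵥ A *ᵥ x) ^ 2
      ≤ (x ⬝ᵥ A *ᵥ x)⁻¹ * ((w ⬝ᵥ A *ᵥ w) * (x ⬝ᵥ A *ᵥ x)) :=
        mul_le_mul_of_nonneg_left hCS (inv_nonneg.2 hq)
    _ = (w ⬝ᵥ A *ᵥ w) * ((x ⬝ᵥ A *ᵥ x) * (x ⬝ᵥ A *ᵥ x)⁻¹) := by ring
    _ ≤ w ⬝ᵥ A *ᵥ w :=
        mul_le_of_le_one_right (by simpa using hA.dotProduct_mulVec_nonneg w) mul_inv_le_one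

end Matrix.PosSemidef

theorem Matrix.eigenvalue_le_of_posSemidef_smul_one_sub {ι : Type*} [Fintype ι] [DecidableEq ι]
    {H : Matrix ι ι ℝ} {c μ : ℝ} (hH : (c • 1 - H).PosSemidef) {w : ι → ℝ} (hw : w ≠ 0)
    (hHw : H *ᵥ w = μ • w) : μ ≤ c := by
  have hquad := hH.dotProduct_mulVec_nonneg w
  simp only [star_trivial, sub_mulVec, smul_mulVec, one_mulVec, hHw, dotProduct_sub,
    dotProduct_smul, smul_eq_mul, ← sub_mul] at hquad
  have hw' : 0 < w ⬝ᵥ w := by simpa using dotProduct_star_self_pos_iff.2 hw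
  exact sub_nonneg.1 (nonneg_of_mul_nonneg_left hquad hw')

theorem stmt_7_general {n : ℕ} (A : Matrix (Fin n) (Fin n) ℝ)
    (hA : A.PosSemidef)
    (x : Fin n → ℝ)
    (H : Matrix (Fin n) (Fin n) ℝ)
    (hH : H = (2 : ℝ) • (1 : Matrix (Fin n) (Fin n) ℝ)
        - (Real.sqrt (x ⬝ᵥ A.mulVec x))⁻¹ • A
        + (Real.sqrt (x ⬝ᵥ A.mulVec x) ^ 3)⁻¹ • vecMulVec (A.mulVec x) (A.mulVec x)) :
    ((2 : ℝ) • (1 : Matrix (Fin n) (Fin n) ℝ) - H).PosSemidef ∧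
    (∀ (μ : ℝ) (w : Fin n → ℝ), w ≠ 0 → H.mulVec w = μ • w → μ ≤ 2) := by
  set q := x ⬝ᵥ A *ᵥ x
  have hq : 0 ≤ q := by simpa using hA.dotProduct_mulVec_nonneg x
  have hcube : (√q ^ 3)⁻¹ = (√q)⁻¹ * q⁻¹ := by
    rw [pow_succ', Real.sq_sqrt hq, mul_inv]
  have hdiff : (2 : ℝ) • (1 : Matrix (Fin n) (Fin n) ℝ) - H
      = (√q)⁻¹ • (A - q⁻¹ • vecMulVec (A *ᵥ x) (A *ᵥ x)) := by
    rw [hH, hcube, smul_sub, smul_smul]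
    abel
  have hpsd : ((2 : ℝ) • (1 : Matrix (Fin n) (Fin n) ℝ) - H).PosSemidef := by
    rw [hdiff]
    exact (hA.sub_smul_vecMulVec_mulVec x).smul (inv_nonneg.2 (Real.sqrt_nonneg q))
  exact ⟨hpsd, fun μ w hw hHw => eigenvalue_le_of_posSemidef_smul_one_sub hpsd hw hHw⟩

/-- For every `x` with `A x ≠ 0`, the matrix
`2I − ∇²f(x) = A/(xᵀAx)^{1/2} − (Ax)(Ax)ᵀ/(xᵀAx)^{3/2}` is positive semidefinite;
equivalently, every eigenvalue of the Hessian
`∇²f(x) = 2I − A/(xᵀAx)^{1/2} + (Ax)(Ax)ᵀ/(xᵀAx)^{3/2}` is at most `2`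
(`f` has positive Lipschitz constant `L₊ = 2`). -/
theorem stmt_7 {n : ℕ} (hn : 0 < n) (A : Matrix (Fin n) (Fin n) ℝ)
    (hA : A.PosSemidef)
    (x : Fin n → ℝ)
    (hx : A.mulVec x ≠ 0)
    (H : Matrix (Fin n) (Fin n) ℝ)
    (hH : H = (2 : ℝ) • (1 : Matrix (Fin n) (Fin n) ℝ)
        - (Real.sqrt (x ⬝ᵥ A.mulVec x))⁻¹ • A
        + (Real.sqrt (x ⬝ᵥ A.mulVec x) ^ 3)⁻¹ • vecMulVec (A.mulVec x) (A.mulVec x)) :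
    ((2 : ℝ) • (1 : Matrix (Fin n) (Fin n) ℝ) - H).PosSemidef ∧
    (∀ (μ : ℝ) (w : Fin n → ℝ), w ≠ 0 → H.mulVec w = μ • w → μ ≤ 2) :=
  stmt_7_general A hA x H hH
end

section
/- Let A = FᵀF with F an r×n real matrix, and let u, v ∈ ℝʳ satisfy ‖u‖ ≤ 1, ‖v‖ ≤ 1 and uᵀv = 0. Define H_x(u,v) = 2I − Fᵀ(u uᵀ + v vᵀ)F/(xᵀAx)^{1/2} + (Ax)(Ax)ᵀ/(xᵀAx)^{3/2}. Then for every x ∈ ℝⁿ with A x ≠ 0, H_x(u,v) − ∇²f(x) is positive semidefinite, i.e. H_x(u,v) ⪰ ∇²f(x). -/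
open Matrix

/-! The two matrices differ only in the middle term, so
`H_x(u,v) - ∇²f(x) = (xᵀAx)^{-1/2} Fᵀ (I - u uᵀ - v vᵀ) F`. A congruence preserves positive
semidefiniteness, and `I - u uᵀ - v vᵀ ⪰ 0` is Bessel's inequality
`(uᵀw)² + (vᵀw)² ≤ ‖w‖²` for orthogonal `u, v` of norm at most one. -/

lemma sq_dotProduct_add_sq_dotProduct_le {m : Type*} [Fintype m] {u v : m → ℝ}
    (hu : u ⬝ᵥ u ≤ 1) (hv : v ⬝ᵥ v ≤ 1) (huv : u ⬝ᵥ v = 0) (w : m → ℝ) :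
    (u ⬝ᵥ w) ^ 2 + (v ⬝ᵥ w) ^ 2 ≤ w ⬝ᵥ w := by
  set a := u ⬝ᵥ w with ha
  set b := v ⬝ᵥ w with hb
  have hproj : 0 ≤ (w - a • u - b • v) ⬝ᵥ (w - a • u - b • v) :=
    Finset.sum_nonneg fun i _ ↦ mul_self_nonneg _
  have hexpand : (w - a • u - b • v) ⬝ᵥ (w - a • u - b • v)
      = w ⬝ᵥ w - 2 * a ^ 2 - 2 * b ^ 2 + a ^ 2 * (u ⬝ᵥ u) + b ^ 2 * (v ⬝ᵥ v) := by
    simp only [sub_dotProduct, dotProduct_sub, smul_dotProduct, dotProduct_smul, smul_eq_mul,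
      dotProduct_comm w u, dotProduct_comm w v, dotProduct_comm v u, ← ha, ← hb, huv]
    ring
  nlinarith [sq_nonneg a, sq_nonneg b]

lemma posSemidef_one_sub_vecMulVec_add_vecMulVec {m : Type*} [Fintype m] [DecidableEq m]
    {u v : m → ℝ} (hu : u ⬝ᵥ u ≤ 1) (hv : v ⬝ᵥ v ≤ 1) (huv : u ⬝ᵥ v = 0) :
    (1 - (vecMulVec u u + vecMulVec v v)).PosSemidef := by
  have hself (a : m → ℝ) : (vecMulVec a a).IsHermitian := by
    simpa using (posSemidef_vecMulVec_self_star a).isHermitian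
  refine .of_dotProduct_mulVec_nonneg (isHermitian_one.sub ((hself u).add (hself v))) fun w ↦ ?_
  have hform : star w ⬝ᵥ (1 - (vecMulVec u u + vecMulVec v v)) *ᵥ w
      = w ⬝ᵥ w - ((u ⬝ᵥ w) ^ 2 + (v ⬝ᵥ w) ^ 2) := by
    simp only [star_trivial, sub_mulVec, one_mulVec, add_mulVec, vecMulVec_mulVec,
      op_smul_eq_smul, dotProduct_sub, dotProduct_add, dotProduct_smul, smul_eq_mul,
      dotProduct_comm w u, dotProduct_comm w v]
    ring
  rw [hform, sub_nonneg]
  exact sq_dotProduct_add_sq_dotProduct_le hu hv huv w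

lemma EuclideanSpace.dotProduct_self_eq_norm_sq {m : Type*} [Fintype m]
    (u : EuclideanSpace ℝ m) : (u : m → ℝ) ⬝ᵥ u = ‖u‖ ^ 2 := by
  rw [← real_inner_self_eq_norm_sq, EuclideanSpace.inner_eq_star_dotProduct, star_trivial]

lemma EuclideanSpace.dotProduct_self_le_one {m : Type*} [Fintype m]
    {u : EuclideanSpace ℝ m} (hu : ‖u‖ ≤ 1) : (u : m → ℝ) ⬝ᵥ u ≤ 1 := by
  rw [dotProduct_self_eq_norm_sq]
  nlinarith [norm_nonneg u]

theorem stmt_9_general {r n : ℕ}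
    (F : Matrix (Fin r) (Fin n) ℝ) (A : Matrix (Fin n) (Fin n) ℝ)
    (hAF : A = Fᵀ * F)
    (u v : EuclideanSpace ℝ (Fin r))
    (hu : ‖u‖ ≤ 1) (hv : ‖v‖ ≤ 1) (huv : u ⬝ᵥ v = 0)
    (H hess : (Fin n → ℝ) → Matrix (Fin n) (Fin n) ℝ)
    (hHdef : ∀ x : Fin n → ℝ,
      H x = (2 : ℝ) • (1 : Matrix (Fin n) (Fin n) ℝ)
        - (Real.sqrt (x ⬝ᵥ A.mulVec x))⁻¹ • (Fᵀ * (vecMulVec u u + vecMulVec v v) * F)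
        + (Real.sqrt (x ⬝ᵥ A.mulVec x) ^ 3)⁻¹ • vecMulVec (A.mulVec x) (A.mulVec x))
    (hhessdef : ∀ x : Fin n → ℝ,
      hess x = (2 : ℝ) • (1 : Matrix (Fin n) (Fin n) ℝ)
        - (Real.sqrt (x ⬝ᵥ A.mulVec x))⁻¹ • A
        + (Real.sqrt (x ⬝ᵥ A.mulVec x) ^ 3)⁻¹ • vecMulVec (A.mulVec x) (A.mulVec x)) :
    ∀ x : Fin n → ℝ, A.mulVec x ≠ 0 → (H x - hess x).PosSemidef := by
  intro x _
  set P : Matrix (Fin r) (Fin r) ℝ := vecMulVec u u + vecMulVec v v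
  have hdiff : H x - hess x = (Real.sqrt (x ⬝ᵥ A *ᵥ x))⁻¹ • (Fᴴ * (1 - P) * F) := by
    rw [hHdef, hhessdef, hAF, conjTranspose_eq_transpose_of_trivial, Matrix.mul_sub,
      Matrix.sub_mul, Matrix.mul_one, smul_sub]
    abel
  have hP : (1 - P).PosSemidef := posSemidef_one_sub_vecMulVec_add_vecMulVec
    (EuclideanSpace.dotProduct_self_le_one hu) (EuclideanSpace.dotProduct_self_le_one hv) huv
  rw [hdiff]
  exact (hP.conjTranspose_mul_mul_same F).smul (by positivity)

/-- Let `A = FᵀF`, and let `u, v ∈ ℝʳ` satisfy `‖u‖ ≤ 1`, `‖v‖ ≤ 1`, `uᵀv = 0`. With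
`H_x(u,v) = 2I − Fᵀ(u uᵀ + v vᵀ)F/(xᵀAx)^{1/2} + (Ax)(Ax)ᵀ/(xᵀAx)^{3/2}` and
`∇²f(x) = 2I − A/(xᵀAx)^{1/2} + (Ax)(Ax)ᵀ/(xᵀAx)^{3/2}`, for every `x` with `A x ≠ 0`
we have `H_x(u,v) ⪰ ∇²f(x)` in the Loewner order. -/
theorem stmt_9 {r n : ℕ} (hn : 0 < n)
    (F : Matrix (Fin r) (Fin n) ℝ) (A : Matrix (Fin n) (Fin n) ℝ)
    (hAF : A = Fᵀ * F)
    (u v : EuclideanSpace ℝ (Fin r))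
    (hu : ‖u‖ ≤ 1) (hv : ‖v‖ ≤ 1) (huv : u ⬝ᵥ v = 0)
    (H hess : (Fin n → ℝ) → Matrix (Fin n) (Fin n) ℝ)
    (hHdef : ∀ x : Fin n → ℝ,
      H x = (2 : ℝ) • (1 : Matrix (Fin n) (Fin n) ℝ)
        - (Real.sqrt (x ⬝ᵥ A.mulVec x))⁻¹ • (Fᵀ * (vecMulVec u u + vecMulVec v v) * F)
        + (Real.sqrt (x ⬝ᵥ A.mulVec x) ^ 3)⁻¹ • vecMulVec (A.mulVec x) (A.mulVec x))
    (hhessdef : ∀ x : Fin n → ℝ,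
      hess x = (2 : ℝ) • (1 : Matrix (Fin n) (Fin n) ℝ)
        - (Real.sqrt (x ⬝ᵥ A.mulVec x))⁻¹ • A
        + (Real.sqrt (x ⬝ᵥ A.mulVec x) ^ 3)⁻¹ • vecMulVec (A.mulVec x) (A.mulVec x)) :
    ∀ x : Fin n → ℝ, A.mulVec x ≠ 0 → (H x - hess x).PosSemidef :=
  stmt_9_general F A hAF u v hu hv huv H hess hHdef hhessdef
end

section
/- Let 0 ≤ λₙ ≤ λ₂ < λ₁ be real numbers, let ζ ∈ ℝ, ω > 0, and δ ∈ [0,1). Then |ζ + ωλ| ≤ δ |ζ + ωλ₁| holds for every λ ∈ [λₙ, λ₂] if and only if both (λ₂ − δλ₁)/(1 − δ) ≤ −ζ/ω ≤ (λₙ + δλ₁)/(1 + δ) and δ ≥ (λ₂ − λₙ)/(2λ₁ − λ₂ − λₙ). In particular, the smallest admissible δ is δ* = (λ₂ − λₙ)/(2λ₁ − λ₂ − λₙ), attained when −ζ/ω = (λ₂ + λₙ)/2. -/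
/-!
Writing `c = -ζ/ω`, one has `|ζ + ωλ| = ω|λ - c|`, so the condition says that the interval
`[λₙ, λ₂]` lies in the closed ball of radius `δ|λ₁ - c|` about `c`, i.e. that both endpoints do.
Either form forces `c < λ₁`, and then the two endpoint conditions are linear in `c`: they are the
two bounds on `-ζ/ω`. These bounds are compatible exactly when `δ ≥ δ*`, so the bound on `δ` is
implied by them. At the midpoint `c = (λ₂ + λₙ)/2` the radius `δ*(λ₁ - c)` is exactly the
half-length `(λ₂ - λₙ)/2` of the interval.
-/

open Set

lemma abs_add_mul_eq_mul_abs_sub {ω : ℝ} (hω : 0 < ω) (ζ x : ℝ) :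
    |ζ + ω * x| = ω * |x - -ζ / ω| := by
  rw [show ζ + ω * x = ω * (x - -ζ / ω) by field_simp; ring, abs_mul, abs_of_pos hω]

lemma forall_mem_Icc_abs_sub_le_iff {a b c r : ℝ} (hab : a ≤ b) :
    (∀ x ∈ Icc a b, |x - c| ≤ r) ↔ c - r ≤ a ∧ b ≤ c + r := by
  simp_rw [abs_sub_comm _ c, mem_Icc_iff_abs_le]
  exact Icc_subset_Icc_iff hab

lemma sub_mul_abs_le_and_le_add_mul_abs_iff {a b l c δ : ℝ} (hal : a < l) (hδ0 : 0 ≤ δ)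
    (hδ1 : δ < 1) :
    (c - δ * |l - c| ≤ a ∧ b ≤ c + δ * |l - c|) ↔
      (b - δ * l) / (1 - δ) ≤ c ∧ c ≤ (a + δ * l) / (1 + δ) := by
  rw [div_le_iff₀ (by linarith), le_div_iff₀ (by linarith)]
  constructor
  · rintro ⟨ha, hb⟩
    have hcl : c < l := by
      by_contra! hlc
      rw [abs_of_nonpos (sub_nonpos.2 hlc)] at ha
      nlinarith
    rw [abs_of_pos (sub_pos.2 hcl)] at ha hb
    constructor <;> linarith
  · rintro ⟨hb, ha⟩
    have hcl : c < l := by nlinarith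
    rw [abs_of_pos (sub_pos.2 hcl)]
    constructor <;> linarith

lemma forall_mem_Icc_abs_sub_le_mul_abs_sub_iff {a b l c δ : ℝ} (hab : a ≤ b) (hal : a < l)
    (hδ0 : 0 ≤ δ) (hδ1 : δ < 1) :
    (∀ x ∈ Icc a b, |x - c| ≤ δ * |l - c|) ↔
      (b - δ * l) / (1 - δ) ≤ c ∧ c ≤ (a + δ * l) / (1 + δ) :=
  (forall_mem_Icc_abs_sub_le_iff hab).trans (sub_mul_abs_le_and_le_add_mul_abs_iff hal hδ0 hδ1)

lemma div_le_of_div_le_of_le_div {a b l c δ : ℝ} (hal : a < l) (hbl : b < l) (hδ0 : 0 ≤ δ)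
    (hδ1 : δ < 1) (hb : (b - δ * l) / (1 - δ) ≤ c) (ha : c ≤ (a + δ * l) / (1 + δ)) :
    (b - a) / (2 * l - b - a) ≤ δ := by
  have h1 : 0 < 1 - δ := by linarith
  have h2 : 0 < 1 + δ := by linarith
  rw [div_le_iff₀ h1] at hb
  rw [le_div_iff₀ h2] at ha
  rw [div_le_iff₀ (by linarith)]
  nlinarith [mul_le_mul_of_nonneg_left hb h2.le, mul_le_mul_of_nonneg_left ha h1.le]

lemma abs_sub_midpoint_le {a b x : ℝ} (hx : x ∈ Icc a b) : |x - (b + a) / 2| ≤ (b - a) / 2 := by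
  rw [abs_le]
  constructor <;> linarith [hx.1, hx.2]

lemma div_mul_sub_midpoint {a b l : ℝ} (hal : a < l) (hbl : b < l) :
    (b - a) / (2 * l - b - a) * (l - (b + a) / 2) = (b - a) / 2 := by
  field_simp [(by linarith : 2 * l - b - a ≠ 0)]
  ring

theorem stmt_19_general (lam1 lam2 lamn : ℝ)
    (hn2 : lamn ≤ lam2) (h21 : lam2 < lam1)
    (ζ ω : ℝ) (hω : 0 < ω)
    (δ : ℝ) (hδ0 : 0 ≤ δ) (hδ1 : δ < 1) :
    ((∀ lam : ℝ, lam ∈ Set.Icc lamn lam2 →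
        |ζ + ω * lam| ≤ δ * |ζ + ω * lam1|) ↔
      ((lam2 - δ * lam1) / (1 - δ) ≤ -ζ / ω ∧
        -ζ / ω ≤ (lamn + δ * lam1) / (1 + δ) ∧
        (lam2 - lamn) / (2 * lam1 - lam2 - lamn) ≤ δ)) ∧
    (-ζ / ω = (lam2 + lamn) / 2 →
      ∀ lam : ℝ, lam ∈ Set.Icc lamn lam2 →
        |ζ + ω * lam| ≤ (lam2 - lamn) / (2 * lam1 - lam2 - lamn) * |ζ + ω * lam1|) := by
  have hn1 : lamn < lam1 := hn2.trans_lt h21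
  simp_rw [abs_add_mul_eq_mul_abs_sub hω, mul_left_comm _ ω, mul_le_mul_iff_right₀ hω]
  refine ⟨?_, fun hc lam hlam => ?_⟩
  · rw [forall_mem_Icc_abs_sub_le_mul_abs_sub_iff hn2 hn1 hδ0 hδ1, ← and_assoc,
      and_iff_left_of_imp fun h => div_le_of_div_le_of_le_div hn1 h21 hδ0 hδ1 h.1 h.2]
  · rw [hc, abs_of_pos (a := lam1 - _) (by linarith), div_mul_sub_midpoint hn1 h21]
    exact abs_sub_midpoint_le hlam

/-- Let `0 ≤ λₙ ≤ λ₂ < λ₁`, `ζ ∈ ℝ`, `ω > 0`, `δ ∈ [0,1)`. Then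
`|ζ + ωλ| ≤ δ|ζ + ωλ₁|` for every `λ ∈ [λₙ, λ₂]` iff both
`(λ₂ − δλ₁)/(1 − δ) ≤ −ζ/ω ≤ (λₙ + δλ₁)/(1 + δ)` and
`δ ≥ (λ₂ − λₙ)/(2λ₁ − λ₂ − λₙ)`. In particular the smallest admissible `δ` is
`δ* = (λ₂ − λₙ)/(2λ₁ − λ₂ − λₙ)`, attained when `−ζ/ω = (λ₂ + λₙ)/2`. -/
theorem stmt_19 (lam1 lam2 lamn : ℝ)
    (h0 : 0 ≤ lamn) (hn2 : lamn ≤ lam2) (h21 : lam2 < lam1)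
    (ζ ω : ℝ) (hω : 0 < ω)
    (δ : ℝ) (hδ0 : 0 ≤ δ) (hδ1 : δ < 1) :
    ((∀ lam : ℝ, lam ∈ Set.Icc lamn lam2 →
        |ζ + ω * lam| ≤ δ * |ζ + ω * lam1|) ↔
      ((lam2 - δ * lam1) / (1 - δ) ≤ -ζ / ω ∧
        -ζ / ω ≤ (lamn + δ * lam1) / (1 + δ) ∧
        (lam2 - lamn) / (2 * lam1 - lam2 - lamn) ≤ δ)) ∧
    (-ζ / ω = (lam2 + lamn) / 2 →
      ∀ lam : ℝ, lam ∈ Set.Icc lamn lam2 →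
        |ζ + ω * lam| ≤ (lam2 - lamn) / (2 * lam1 - lam2 - lamn) * |ζ + ω * lam1|) :=
  stmt_19_general lam1 lam2 lamn hn2 h21 ζ ω hω δ hδ0 hδ1
end
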